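/- arXiv:1612.07661 — 2 statements merged into one kernel-verified Lean document; each statement's English description precedes it below -/
import Mathlib

section
/- Characterization of stationary solutions (necessity): let (m, w, f) be a stationary solution of the continuous Petri net dynamics (m constant, w affine nonnegative, f constant) satisfying ṁ = C⁺ f − m/τ, ẇ = m/τ − C⁻ f, and the policy-form flow equation f = inf over policies π with S_π w(t) = 0 of (C⁻_π)^{-1} S_π (m/τ), where the infimum is attained by some policy at each time. Then: (a) m/τ = C⁺ f; (b) ẇ = m/τ − C⁻ f; (c) C f ≥ 0; and (d) there exists a policy π* such that S_{π*} w(t) = 0 for all t and (S_{π*} C⁺ − C⁻_{π*}) f = 0. -/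
open Matrix

/-! Along a stationary solution `ẇ = m/τ − C⁻ f` is constant and equals `C f` once
`m/τ = C⁺ f`; since `w` is affine and nonnegative for all `t ≥ 0`, its slope `C f` is
nonnegative. A policy attaining the infimum at one positive time selects places where the
affine function `w` vanishes at that time; being nonnegative with nonnegative slope, `w`
then vanishes there at all times, and the flow equation `C⁻_π f = S_π (m/τ) = S_π C⁺ f`
gives (d). -/

section AffineNonneg

variable {a b : ℝ}

theorem nonneg_of_forall_nonneg_add_mul (h : ∀ t : ℝ, 0 ≤ t → 0 ≤ a + t * b) : 0 ≤ b := by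
  have ha : 0 ≤ a := by simpa using h 0 le_rfl
  by_contra! hb
  have := h ((a + 1) / -b) (div_nonneg (by linarith) (by linarith))
  rw [div_mul_eq_mul_div, div_neg, mul_div_assoc, div_self hb.ne, mul_one] at this
  linarith

theorem add_mul_eq_zero_of_forall_nonneg {t₀ : ℝ} (h : ∀ t : ℝ, 0 ≤ t → 0 ≤ a + t * b)
    (ht₀ : 0 < t₀) (h₀ : a + t₀ * b = 0) (t : ℝ) : a + t * b = 0 := by
  have ha : 0 ≤ a := by simpa using h 0 le_rfl
  have hb : 0 ≤ b := nonneg_of_forall_nonneg_add_mul h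
  have hb0 : b = 0 := by nlinarith
  subst hb0
  simpa using h₀

end AffineNonneg

theorem of_ite_eq_mulVec {P Q R : Type*} [Fintype P] [DecidableEq P] [NonAssocSemiring R]
    (π : Q → P) (v : P → R) :
    (of fun q p => if p = π q then (1 : R) else 0) *ᵥ v = v ∘ π := by
  funext q
  simp [mulVec, dotProduct]

theorem stationary_characterization_necessity_general
    {P Q : Type*} [Fintype P] [Fintype Q] [DecidableEq P] [DecidableEq Q]
    (qin : Q → Finset P)
    (Cplus Cminus : Matrix P Q ℝ) (τ : P → ℝ)
    (Cm : (Q → P) → Matrix Q Q ℝ)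
    (hCm : ∀ π : Q → P, IsUnit (Cm π).det)
    (S : (Q → P) → Matrix Q P ℝ)
    (hS : ∀ π, S π = Matrix.of fun q p => if p = π q then (1 : ℝ) else 0)
    (m : P → ℝ) (w0 wdot : P → ℝ) (f : Q → ℝ)
    (hw_nonneg : ∀ t : ℝ, 0 ≤ t → ∀ p, 0 ≤ w0 p + t * wdot p)
    -- `ṁ = C⁺ f − m/τ` with `m` constant, i.e. `ṁ = 0`:
    (hmdot : (0 : P → ℝ) = Cplus *ᵥ f - fun p => m p / τ p)
    -- `ẇ = m/τ − C⁻ f`: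
    (hwdot : wdot = (fun p => m p / τ p) - Cminus *ᵥ f)
    -- the policy-form flow equation, with attained infimum, at every time `t ≥ 0`:
    (hinf : ∀ t : ℝ, 0 ≤ t →
      (∀ π : Q → P, (∀ q, π q ∈ qin q) →
        S π *ᵥ (fun p => w0 p + t * wdot p) = 0 →
        ∀ q, f q ≤ ((Cm π)⁻¹ *ᵥ (S π *ᵥ fun p => m p / τ p)) q) ∧
      (∃ π : Q → P, (∀ q, π q ∈ qin q) ∧
        S π *ᵥ (fun p => w0 p + t * wdot p) = 0 ∧
        f = (Cm π)⁻¹ *ᵥ (S π *ᵥ fun p => m p / τ p))) :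
    (fun p => m p / τ p) = Cplus *ᵥ f ∧
    wdot = (fun p => m p / τ p) - Cminus *ᵥ f ∧
    (∀ p, 0 ≤ ((Cplus - Cminus) *ᵥ f) p) ∧
    (∃ π : Q → P, (∀ q, π q ∈ qin q) ∧
      (∀ t : ℝ, 0 ≤ t → S π *ᵥ (fun p => w0 p + t * wdot p) = 0) ∧
      (S π * Cplus - Cm π) *ᵥ f = 0) := by
  have ha : (fun p => m p / τ p) = Cplus *ᵥ f := (sub_eq_zero.mp hmdot.symm).symm
  have hCf : (Cplus - Cminus) *ᵥ f = wdot := by rw [sub_mulVec, ← ha, hwdot]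
  refine ⟨ha, hwdot, fun p => hCf ▸ nonneg_of_forall_nonneg_add_mul (hw_nonneg · · p), ?_⟩
  obtain ⟨-, π, hπin, hπ₁, hπf⟩ := hinf 1 zero_le_one
  have hflow : Cm π *ᵥ f = S π *ᵥ fun p => m p / τ p := by
    rw [hπf, mulVec_mulVec, mul_nonsing_inv _ (hCm π), one_mulVec]
  refine ⟨π, hπin, fun t _ => ?_, ?_⟩
  · rw [hS, of_ite_eq_mulVec] at hπ₁ ⊢
    funext q
    exact add_mul_eq_zero_of_forall_nonneg (hw_nonneg · · (π q)) one_pos (congrFun hπ₁ q) t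
  · rw [sub_mulVec, ← mulVec_mulVec, hflow, ha, sub_self]

/-- characterization of stationary solutions (necessity).
Policies are maps `π : Q → P` choosing an upstream place `π q ∈ q^in` of each
transition; `S_π` is the 0/1 selection matrix and `C⁻_π` the invertible policy
downstream flow matrix. A stationary solution (constant `m`, affine nonnegative
`w`, constant `f`) whose flow is the attained infimum over admissible policies of
`(C⁻_π)⁻¹ S_π (m/τ)` satisfies: (a) `m/τ = C⁺ f`; (b) `ẇ = m/τ − C⁻ f`;
(c) `C f ≥ 0`; (d) there is a policy `π*` with `S_{π*} w(t) = 0` for all `t ≥ 0`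
and `(S_{π*} C⁺ − C⁻_{π*}) f = 0`. -/
theorem stationary_characterization_necessity
    {P Q : Type*} [Fintype P] [Fintype Q] [DecidableEq P] [DecidableEq Q]
    (qin : Q → Finset P)
    (Cplus Cminus : Matrix P Q ℝ) (τ : P → ℝ) (hτ : ∀ p, 0 < τ p)
    (Cm : (Q → P) → Matrix Q Q ℝ)
    (hCm : ∀ π : Q → P, IsUnit (Cm π).det)
    (S : (Q → P) → Matrix Q P ℝ)
    (hS : ∀ π, S π = Matrix.of fun q p => if p = π q then (1 : ℝ) else 0)
    (m : P → ℝ) (w0 wdot : P → ℝ) (f : Q → ℝ)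
    (hm_nonneg : ∀ p, 0 ≤ m p)
    (hw_nonneg : ∀ t : ℝ, 0 ≤ t → ∀ p, 0 ≤ w0 p + t * wdot p)
    -- `ṁ = C⁺ f − m/τ` with `m` constant, i.e. `ṁ = 0`:
    (hmdot : (0 : P → ℝ) = Cplus *ᵥ f - fun p => m p / τ p)
    -- `ẇ = m/τ − C⁻ f`:
    (hwdot : wdot = (fun p => m p / τ p) - Cminus *ᵥ f)
    -- the policy-form flow equation, with attained infimum, at every time `t ≥ 0`:
    (hinf : ∀ t : ℝ, 0 ≤ t →
      (∀ π : Q → P, (∀ q, π q ∈ qin q) →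
        S π *ᵥ (fun p => w0 p + t * wdot p) = 0 →
        ∀ q, f q ≤ ((Cm π)⁻¹ *ᵥ (S π *ᵥ fun p => m p / τ p)) q) ∧
      (∃ π : Q → P, (∀ q, π q ∈ qin q) ∧
        S π *ᵥ (fun p => w0 p + t * wdot p) = 0 ∧
        f = (Cm π)⁻¹ *ᵥ (S π *ᵥ fun p => m p / τ p))) :
    (fun p => m p / τ p) = Cplus *ᵥ f ∧
    wdot = (fun p => m p / τ p) - Cminus *ᵥ f ∧
    (∀ p, 0 ≤ ((Cplus - Cminus) *ᵥ f) p) ∧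
    (∃ π : Q → P, (∀ q, π q ∈ qin q) ∧
      (∀ t : ℝ, 0 ≤ t → S π *ᵥ (fun p => w0 p + t * wdot p) = 0) ∧
      (S π * Cplus - Cm π) *ᵥ f = 0) :=
  stationary_characterization_necessity_general qin Cplus Cminus τ Cm hCm S hS m w0 wdot f hw_nonneg
    hmdot hwdot hinf
end

section
/- Determination of the stationary flow by the initial marking: suppose a trajectory of the continuous Petri net converges to a stationary solution (m^∞, w^∞, f^∞), a fixed policy π attains the infimum at all times (so S_π ṁ(t) = (S_π C⁺ − C⁻_π) f(t) and S_π m(t) = D_π C⁻_π f(t) for all t), and 0 is a semi-simple eigenvalue of S_π C⁺ − C⁻_π. Let Q be the projection onto ker((S_π C⁺ (C⁻_π)^{-1} − I) D_π^{-1}) along its range. Then f^∞ = (C⁻_π)^{-1} D_π^{-1} Q S_π m(0); in particular f^∞ is uniquely determined by the initial marking m(0). -/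
/-!
Put `B = (S C⁺ C⁻¹ − I) D⁻¹`. Then `B (D C) = S C⁺ − C`, so the velocity `(S C⁺ − C) f(t)` of
`S m(t)` lies in the range of `B` and is annihilated by the projection `Q`: hence `Q S m(t)` is
constant. As `t → ∞`, `S m(t) = D C f(t) → D C f∞`, so `Q S m(0) = Q D C f∞`, and stationarity
puts `D C f∞` in the kernel of `B`, where `Q` is the identity.
-/

open Matrix Filter Topology

theorem Matrix.mul_inv_sub_one_mul_inv_mul_mul {n R : Type*} [Fintype n] [DecidableEq n]
    [CommRing R] (A C D : Matrix n n R) (hC : IsUnit C.det) (hD : IsUnit D.det) :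
    (A * C⁻¹ - 1) * D⁻¹ * (D * C) = A - C := by
  rw [Matrix.mul_assoc, ← Matrix.mul_assoc D⁻¹, nonsing_inv_mul _ hD, Matrix.one_mul,
    Matrix.sub_mul, Matrix.one_mul, Matrix.mul_assoc, nonsing_inv_mul _ hC, Matrix.mul_one]

theorem LinearMap.map_eq_map_limit_of_deriv_mem_ker {E F : Type*} [NormedAddCommGroup E]
    [NormedSpace ℝ E] [FiniteDimensional ℝ E] [NormedAddCommGroup F] [NormedSpace ℝ F]
    (L : E →ₗ[ℝ] F) {x x' : ℝ → E} {a : E} (hx : ∀ t, HasDerivAt x (x' t) t)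
    (hker : ∀ t, x' t ∈ LinearMap.ker L) (hlim : Tendsto x atTop (𝓝 a)) (s : ℝ) :
    L (x s) = L a := by
  let L' := L.toContinuousLinearMap
  have hderiv (t : ℝ) : HasDerivAt (fun t => L' (x t)) 0 t := by
    simpa [L', Function.comp_def, LinearMap.mem_ker.mp (hker t)] using
      L'.hasFDerivAt.comp_hasDerivAt t (hx t)
  have hconst (t : ℝ) : L' (x t) = L' (x s) :=
    is_const_of_deriv_eq_zero (fun t => (hderiv t).differentiableAt)
      (fun t => (hderiv t).deriv) t s
  have hlimL : Tendsto (fun t => L' (x t)) atTop (𝓝 (L' a)) :=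
    (L'.continuous.tendsto a).comp hlim
  simp only [hconst, tendsto_const_nhds_iff] at hlimL
  exact hlimL

theorem stationary_flow_determined_by_initial_marking_general
    {P Q : Type*} [Fintype P] [Fintype Q] [DecidableEq Q]
    (S : Matrix Q P ℝ) (Cplus : Matrix P Q ℝ) (Cπ Dπ : Matrix Q Q ℝ)
    (hCπ : IsUnit Cπ.det) (hDπ : IsUnit Dπ.det)
    (m : ℝ → P → ℝ) (f : ℝ → Q → ℝ) (finf : Q → ℝ)
    -- the constant-policy dynamics holds at all times:
    (hmdot : ∀ t (q : Q), HasDerivAt (fun s => (S *ᵥ m s) q)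
      (((S * Cplus - Cπ) *ᵥ f t) q) t)
    (hmark : ∀ t, S *ᵥ m t = (Dπ * Cπ) *ᵥ f t)
    -- convergence towards the stationary solution:
    (hconv : Tendsto f atTop (nhds finf))
    -- stationarity of `f∞`:
    (hstat : (S * Cplus - Cπ) *ᵥ finf = 0)
    -- `Qproj` is the projection onto the kernel of
    -- `(S_π C⁺ (C⁻_π)⁻¹ − I) D_π⁻¹` along its range:
    (Qproj : (Q → ℝ) →ₗ[ℝ] (Q → ℝ))
    (hQker : ∀ v ∈ LinearMap.ker ((S * Cplus * Cπ⁻¹ - 1) * Dπ⁻¹).mulVecLin,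
      Qproj v = v)
    (hQran : ∀ v ∈ LinearMap.range ((S * Cplus * Cπ⁻¹ - 1) * Dπ⁻¹).mulVecLin,
      Qproj v = 0) :
    finf = (Cπ⁻¹ * Dπ⁻¹) *ᵥ Qproj (S *ᵥ m 0) := by
  have hB := (S * Cplus).mul_inv_sub_one_mul_inv_mul_mul Cπ Dπ hCπ hDπ
  have hvel (t : ℝ) : (S * Cplus - Cπ) *ᵥ f t ∈ LinearMap.ker Qproj :=
    hQran _ ⟨(Dπ * Cπ) *ᵥ f t, by rw [mulVecLin_apply, mulVec_mulVec, hB]⟩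
  have hlim : Tendsto (fun t => S *ᵥ m t) atTop (𝓝 ((Dπ * Cπ) *ᵥ finf)) := by
    simpa only [hmark, Function.comp_def, mulVecLin_apply] using
      ((Dπ * Cπ).mulVecLin.continuous_of_finiteDimensional.tendsto finf).comp hconv
  have hconst := Qproj.map_eq_map_limit_of_deriv_mem_ker
    (fun t => hasDerivAt_pi.2 (hmdot t)) hvel hlim 0
  have hfix : Qproj ((Dπ * Cπ) *ᵥ finf) = (Dπ * Cπ) *ᵥ finf :=
    hQker _ (by rw [LinearMap.mem_ker, mulVecLin_apply, mulVec_mulVec, hB, hstat])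
  have hDC : IsUnit (Dπ * Cπ).det := by rw [det_mul]; exact hDπ.mul hCπ
  rw [hconst, hfix, mulVec_mulVec, ← Matrix.mul_inv_rev, nonsing_inv_mul _ hDC, one_mulVec]

/-- determination of the stationary flow by the initial marking.
Suppose the trajectory converges to a stationary solution `f∞`, a fixed policy
`π` attains the infimum at all times (so `S_π ṁ = (S_π C⁺ − C⁻_π) f` and
`S_π m = D_π C⁻_π f`), and `0` is a semi-simple eigenvalue of `S_π C⁺ − C⁻_π`.
With `Qproj` the projection onto `ker((S_π C⁺ (C⁻_π)⁻¹ − I) D_π⁻¹)` along its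
range, we have `f∞ = (C⁻_π)⁻¹ D_π⁻¹ Qproj (S_π m(0))`. -/
theorem stationary_flow_determined_by_initial_marking
    {P Q : Type*} [Fintype P] [Fintype Q] [DecidableEq P] [DecidableEq Q]
    (S : Matrix Q P ℝ) (Cplus : Matrix P Q ℝ) (Cπ Dπ : Matrix Q Q ℝ)
    (hCπ : IsUnit Cπ.det) (hDπ : IsUnit Dπ.det)
    (m : ℝ → P → ℝ) (f : ℝ → Q → ℝ) (finf : Q → ℝ)
    -- the constant-policy dynamics holds at all times:
    (hmdot : ∀ t (q : Q), HasDerivAt (fun s => (S *ᵥ m s) q)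
      (((S * Cplus - Cπ) *ᵥ f t) q) t)
    (hmark : ∀ t, S *ᵥ m t = (Dπ * Cπ) *ᵥ f t)
    -- convergence towards the stationary solution:
    (hconv : Tendsto f atTop (nhds finf))
    -- stationarity of `f∞`:
    (hstat : (S * Cplus - Cπ) *ᵥ finf = 0)
    -- `0` is a semi-simple eigenvalue of `S_π C⁺ − C⁻_π`:
    (hss : IsCompl (LinearMap.ker (S * Cplus - Cπ).mulVecLin)
      (LinearMap.range (S * Cplus - Cπ).mulVecLin))
    -- `Qproj` is the projection onto the kernel of
    -- `(S_π C⁺ (C⁻_π)⁻¹ − I) D_π⁻¹` along its range: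
    (Qproj : (Q → ℝ) →ₗ[ℝ] (Q → ℝ))
    (hQker : ∀ v ∈ LinearMap.ker ((S * Cplus * Cπ⁻¹ - 1) * Dπ⁻¹).mulVecLin,
      Qproj v = v)
    (hQran : ∀ v ∈ LinearMap.range ((S * Cplus * Cπ⁻¹ - 1) * Dπ⁻¹).mulVecLin,
      Qproj v = 0) :
    finf = (Cπ⁻¹ * Dπ⁻¹) *ᵥ Qproj (S *ᵥ m 0) :=
  stationary_flow_determined_by_initial_marking_general S Cplus Cπ Dπ hCπ hDπ m f finf hmdot hmark
    hconv hstat Qproj hQker hQran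
end
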